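/- Let n ≥ 1, I_{n,n} = diag(1ₙ, −1ₙ), and S = [[0,1ₙ],[1ₙ,0]] ∈ Mat_{2n}(ℂ). Define μ : ℂ^{2n} → Mat_{2n}(ℂ) by μ(v) = −(i/2)(v v* I_{n,n} − S (v v* I_{n,n})ᵀ S). Then: (a) μ(v)* I_{n,n} + I_{n,n} μ(v) = 0 and μ(v)ᵀ S + S μ(v) = 0 for all v (μ takes values in o*(2n)); (b) for every X ∈ Mat_{2n}(ℂ) with X* I_{n,n} + I_{n,n} X = 0 and Xᵀ S + S X = 0, and all v, u ∈ ℂ^{2n}, one has (1/2)·tr(ν(v,u) X) = Im((−Xv)* I_{n,n} u), where ν(v,u) = −(i/2)((u v* + v u*) I_{n,n} − S ((u v* + v u*) I_{n,n})ᵀ S) is the real directional derivative of μ at v in direction u; (c) μ(g v) = g μ(v) g⁻¹ for every g with g* I_{n,n} g = I_{n,n} and gᵀ S g = S. -/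

import Mathlib

/-! Put `θ(A) = A − S Aᵀ S`, so that `μ(v) = −(i/2) θ(v v* I)` with `I = I_{n,n}`. For any
symmetric involution `S`, `θ(A)` lies in the complex orthogonal algebra of `S`, `θ` commutes with
conjugation by the group of `S`, and `tr(θ(A) X) = 2 tr(A X)` for `X` in that algebra. Because `I`
anticommutes with `S`, `I θ(v v* I) = I v v* I + S (v v*)ᵀ S` is Hermitian, so the factor `−i/2`
makes `I μ(v)` skew-Hermitian. For (b), `I X` is skew-Hermitian, hence
`tr((u v* + v u*) I X) = z − z̄ = 2i Im z` with `z = v* I X u = (−X v)* I u`. -/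

open Matrix

/-- The matrix `I_{n,n} = diag(1ₙ, −1ₙ)`. -/
noncomputable def Inn (n : ℕ) : Matrix (Fin n ⊕ Fin n) (Fin n ⊕ Fin n) ℂ :=
  Matrix.fromBlocks 1 0 0 (-1)

/-- The matrix `S = [[0,1ₙ],[1ₙ,0]]`. -/
noncomputable def Smat (n : ℕ) : Matrix (Fin n ⊕ Fin n) (Fin n ⊕ Fin n) ℂ :=
  Matrix.fromBlocks 0 1 1 0

/-- The moment map `μ(v) = −(i/2)(v v* I_{n,n} − S (v v* I_{n,n})ᵀ S)` for the
`O*(2n)`-action on `(ℂ^{2n})_ℝ`. -/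
noncomputable def momentOstar (n : ℕ) (v : Fin n ⊕ Fin n → ℂ) :
    Matrix (Fin n ⊕ Fin n) (Fin n ⊕ Fin n) ℂ :=
  (-(Complex.I / 2)) •
    (Matrix.vecMulVec v (star v) * Inn n
      - Smat n * (Matrix.vecMulVec v (star v) * Inn n)ᵀ * Smat n)

/-- The real directional derivative of `μ` at `v` in direction `u`. -/
noncomputable def momentOstarDeriv (n : ℕ) (v u : Fin n ⊕ Fin n → ℂ) :
    Matrix (Fin n ⊕ Fin n) (Fin n ⊕ Fin n) ℂ :=
  (-(Complex.I / 2)) •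
    ((Matrix.vecMulVec u (star v) + Matrix.vecMulVec v (star u)) * Inn n
      - Smat n * ((Matrix.vecMulVec u (star v) + Matrix.vecMulVec v (star u)) * Inn n)ᵀ
          * Smat n)

section SymmetricInvolution

variable {ι R : Type*} [Fintype ι] [DecidableEq ι] [CommRing R] {S : Matrix ι ι R}

lemma inv_eq_mul_mul_of_mul_mul_eq {K H g : Matrix ι ι R} (hK : K * K = 1)
    (h : H * K * g = K) : g⁻¹ = K * H * K :=
  inv_eq_left_inv <| by rw [Matrix.mul_assoc K H K, Matrix.mul_assoc, h, hK]

lemma transpose_mul_add_mul_sub_mul_transpose_mul_eq_zero (hSt : Sᵀ = S) (hS : S * S = 1)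
    (A : Matrix ι ι R) :
    (A - S * Aᵀ * S)ᵀ * S + S * (A - S * Aᵀ * S) = 0 := by
  have hS' (x : Matrix ι ι R) : S * (S * x) = x := by
    rw [← Matrix.mul_assoc, hS, Matrix.one_mul]
  simp only [Matrix.transpose_sub, Matrix.transpose_mul, hSt, Matrix.transpose_transpose,
    Matrix.sub_mul, Matrix.mul_sub, Matrix.mul_assoc, hS, hS', Matrix.mul_one]
  abel

lemma trace_sub_mul_transpose_mul_mul (hSt : Sᵀ = S) (hS : S * S = 1) {X : Matrix ι ι R}
    (hX : Xᵀ * S + S * X = 0) (A : Matrix ι ι R) :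
    trace ((A - S * Aᵀ * S) * X) = 2 * trace (A * X) := by
  have hSXS : S * Xᵀ * S = -X := by
    rw [Matrix.mul_assoc, eq_neg_of_add_eq_zero_left hX, Matrix.mul_neg, ← Matrix.mul_assoc, hS,
      Matrix.one_mul]
  have hSAS : trace (S * Aᵀ * S * X) = -trace (A * X) := by
    calc trace (S * Aᵀ * S * X) = trace (Aᵀ * (S * X * S)) := by
          rw [Matrix.mul_assoc, Matrix.mul_assoc, trace_mul_comm, Matrix.mul_assoc,
            Matrix.mul_assoc]
      _ = trace ((S * X * S)ᵀ * A) := by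
          rw [← trace_transpose, Matrix.transpose_mul, Matrix.transpose_transpose]
      _ = -trace (A * X) := by
          rw [Matrix.transpose_mul, Matrix.transpose_mul, hSt, ← Matrix.mul_assoc, hSXS,
            Matrix.neg_mul, trace_neg, trace_mul_comm]
  rw [Matrix.sub_mul, trace_sub, hSAS]
  ring

lemma sub_mul_transpose_mul_conj (hSt : Sᵀ = S) (hS : S * S = 1) {g : Matrix ι ι R}
    (hg : gᵀ * S * g = S) (A : Matrix ι ι R) :
    g * A * g⁻¹ - S * (g * A * g⁻¹)ᵀ * S = g * (A - S * Aᵀ * S) * g⁻¹ := by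
  have hS' (x : Matrix ι ι R) : S * (S * x) = x := by
    rw [← Matrix.mul_assoc, hS, Matrix.one_mul]
  rw [inv_eq_mul_mul_of_mul_mul_eq hS hg]
  simp only [Matrix.transpose_mul, hSt, Matrix.transpose_transpose, Matrix.mul_sub,
    Matrix.sub_mul, Matrix.mul_assoc, hS']

end SymmetricInvolution

lemma trace_vecMulVec_mul {ι R : Type*} [Fintype ι] [CommRing R] (a b : ι → R)
    (M : Matrix ι ι R) : trace (vecMulVec a b * M) = b ⬝ᵥ (M *ᵥ a) := by
  rw [vecMulVec_mul, trace_vecMulVec, dotProduct_comm, dotProduct_mulVec]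

lemma trace_vecMulVec_add_mul_of_conjTranspose_eq_neg {ι : Type*} [Fintype ι]
    {M : Matrix ι ι ℂ} (hM : Mᴴ = -M) (u v : ι → ℂ) :
    trace ((vecMulVec u (star v) + vecMulVec v (star u)) * M)
      = 2 * Complex.I * (star v ⬝ᵥ (M *ᵥ u)).im := by
  have : star u ⬝ᵥ (M *ᵥ v) = -star (star v ⬝ᵥ (M *ᵥ u)) := by
    rw [star_dotProduct, star_mulVec, ← dotProduct_mulVec, hM, neg_mulVec, dotProduct_neg,
      star_neg]
  rw [Matrix.add_mul, trace_add, trace_vecMulVec_mul, trace_vecMulVec_mul, this,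
    ← sub_eq_add_neg]
  exact (Complex.sub_conj _).trans (by push_cast; ring)

section Ostar

variable {n : ℕ}

lemma Inn_mul_Inn : Inn n * Inn n = 1 := by
  simp [Inn, fromBlocks_multiply, ← fromBlocks_one]

lemma Smat_mul_Smat : Smat n * Smat n = 1 := by
  simp [Smat, fromBlocks_multiply, ← fromBlocks_one]

lemma Inn_transpose : (Inn n)ᵀ = Inn n := by
  simp [Inn, fromBlocks_transpose]

lemma Inn_conjTranspose : (Inn n)ᴴ = Inn n := by
  simp [Inn, fromBlocks_conjTranspose]

lemma Smat_transpose : (Smat n)ᵀ = Smat n := by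
  simp [Smat, fromBlocks_transpose]

lemma Smat_conjTranspose : (Smat n)ᴴ = Smat n := by
  simp [Smat, fromBlocks_conjTranspose]

lemma Inn_mul_Smat : Inn n * Smat n = -(Smat n * Inn n) := by
  simp [Inn, Smat, fromBlocks_multiply, fromBlocks_neg]

lemma Inn_mul_sub_mul_transpose_mul (A : Matrix (Fin n ⊕ Fin n) (Fin n ⊕ Fin n) ℂ) :
    Inn n * (A * Inn n - Smat n * (A * Inn n)ᵀ * Smat n)
      = Inn n * A * Inn n + Smat n * Aᵀ * Smat n := by
  have hJSJ : Inn n * Smat n * Inn n = -Smat n := by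
    rw [Inn_mul_Smat, Matrix.neg_mul, Matrix.mul_assoc, Inn_mul_Inn, Matrix.mul_one]
  rw [Matrix.transpose_mul, Inn_transpose, Matrix.mul_sub]
  simp only [← Matrix.mul_assoc]
  rw [hJSJ, Matrix.neg_mul, Matrix.neg_mul, sub_neg_eq_add]

lemma momentOstar_conjTranspose_mul_Inn_add (v : Fin n ⊕ Fin n → ℂ) :
    (momentOstar n v)ᴴ * Inn n + Inn n * momentOstar n v = 0 := by
  set P := vecMulVec v (star v)
  have hP : P.IsHermitian := by rw [IsHermitian, conjTranspose_vecMulVec, star_star]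
  have hH : (Inn n * P * Inn n + Smat n * Pᵀ * Smat n).IsHermitian := by
    have h := isHermitian_mul_mul_conjTranspose (Inn n) hP
    have h' := isHermitian_mul_mul_conjTranspose (Smat n) hP.transpose
    rw [Inn_conjTranspose] at h
    rw [Smat_conjTranspose] at h'
    exact h.add h'
  have hJμ : Inn n * momentOstar n v
      = (-(Complex.I / 2)) • (Inn n * P * Inn n + Smat n * Pᵀ * Smat n) := by
    rw [momentOstar, Matrix.mul_smul, Inn_mul_sub_mul_transpose_mul]
  have hc : star (-(Complex.I / 2)) + -(Complex.I / 2) = 0 := by norm_num [Complex.ext_iff]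
  rw [← Inn_conjTranspose, ← conjTranspose_mul, Inn_conjTranspose, hJμ, conjTranspose_smul,
    hH.eq, ← add_smul, hc, zero_smul]

lemma momentOstar_transpose_mul_Smat_add (v : Fin n ⊕ Fin n → ℂ) :
    (momentOstar n v)ᵀ * Smat n + Smat n * momentOstar n v = 0 := by
  rw [momentOstar, transpose_smul, Matrix.smul_mul, Matrix.mul_smul, ← smul_add,
    transpose_mul_add_mul_sub_mul_transpose_mul_eq_zero Smat_transpose Smat_mul_Smat, smul_zero]

lemma half_mul_trace_momentOstarDeriv_mul {X : Matrix (Fin n ⊕ Fin n) (Fin n ⊕ Fin n) ℂ}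
    (hXJ : Xᴴ * Inn n + Inn n * X = 0) (hXS : Xᵀ * Smat n + Smat n * X = 0)
    (v u : Fin n ⊕ Fin n → ℂ) :
    (1 / 2 : ℂ) * trace (momentOstarDeriv n v u * X)
      = ((star (-(X *ᵥ v)) ⬝ᵥ (Inn n *ᵥ u)).im : ℂ) := by
  have hXJ' := eq_neg_of_add_eq_zero_left hXJ
  have hM : (Inn n * X)ᴴ = -(Inn n * X) := by rw [conjTranspose_mul, Inn_conjTranspose, hXJ']
  have hz : star (-(X *ᵥ v)) ⬝ᵥ (Inn n *ᵥ u) = star v ⬝ᵥ ((Inn n * X) *ᵥ u) := by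
    rw [star_neg, star_mulVec, neg_dotProduct, ← dotProduct_mulVec, mulVec_mulVec, hXJ',
      neg_mulVec, dotProduct_neg, neg_neg]
  rw [momentOstarDeriv, smul_mul, trace_smul,
    trace_sub_mul_transpose_mul_mul Smat_transpose Smat_mul_Smat hXS, Matrix.mul_assoc,
    trace_vecMulVec_add_mul_of_conjTranspose_eq_neg hM, hz, smul_eq_mul]
  ring_nf
  rw [Complex.I_sq]
  ring

lemma momentOstar_mulVec {g : Matrix (Fin n ⊕ Fin n) (Fin n ⊕ Fin n) ℂ}
    (hgJ : gᴴ * Inn n * g = Inn n) (hgS : gᵀ * Smat n * g = Smat n) (v : Fin n ⊕ Fin n → ℂ) :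
    momentOstar n (g *ᵥ v) = g * momentOstar n v * g⁻¹ := by
  have hJJ (x : Matrix (Fin n ⊕ Fin n) (Fin n ⊕ Fin n) ℂ) : Inn n * (Inn n * x) = x := by
    rw [← Matrix.mul_assoc, Inn_mul_Inn, Matrix.one_mul]
  have hP : vecMulVec (g *ᵥ v) (star (g *ᵥ v)) * Inn n
      = g * (vecMulVec v (star v) * Inn n) * g⁻¹ := by
    rw [inv_eq_mul_mul_of_mul_mul_eq Inn_mul_Inn hgJ, star_mulVec, ← vecMulVec_mul,
      ← mul_vecMulVec]
    simp only [Matrix.mul_assoc, hJJ]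
  rw [momentOstar, momentOstar, hP, sub_mul_transpose_mul_conj Smat_transpose Smat_mul_Smat hgS,
    Matrix.mul_smul, Matrix.smul_mul]

end Ostar

theorem moment_map_ostar_general (n : ℕ) :
    -- (a) `μ` takes values in `o*(2n)`
    (∀ v : Fin n ⊕ Fin n → ℂ,
      (momentOstar n v)ᴴ * Inn n + Inn n * momentOstar n v = 0 ∧
      (momentOstar n v)ᵀ * Smat n + Smat n * momentOstar n v = 0) ∧
    -- (b) `(1/2) tr(ν(v,u) X) = Im((−Xv)* I_{n,n} u)`
    (∀ X : Matrix (Fin n ⊕ Fin n) (Fin n ⊕ Fin n) ℂ,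
      Xᴴ * Inn n + Inn n * X = 0 → Xᵀ * Smat n + Smat n * X = 0 →
      ∀ v u : Fin n ⊕ Fin n → ℂ,
        (1 / 2 : ℂ) * Matrix.trace (momentOstarDeriv n v u * X)
          = ((dotProduct (star (-(X.mulVec v))) ((Inn n).mulVec u)).im : ℂ)) ∧
    -- (c) `O*(2n)`-equivariance
    (∀ g : Matrix (Fin n ⊕ Fin n) (Fin n ⊕ Fin n) ℂ,
      gᴴ * Inn n * g = Inn n → gᵀ * Smat n * g = Smat n →
      ∀ v : Fin n ⊕ Fin n → ℂ,
        momentOstar n (g.mulVec v) = g * momentOstar n v * g⁻¹) :=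
  ⟨fun v => ⟨momentOstar_conjTranspose_mul_Inn_add v, momentOstar_transpose_mul_Smat_add v⟩,
    fun _ hXJ hXS => half_mul_trace_momentOstarDeriv_mul hXJ hXS,
    fun _ hgJ hgS => momentOstar_mulVec hgJ hgS⟩

theorem moment_map_ostar (n : ℕ) (hn : 1 ≤ n) :
    -- (a) `μ` takes values in `o*(2n)`
    (∀ v : Fin n ⊕ Fin n → ℂ,
      (momentOstar n v)ᴴ * Inn n + Inn n * momentOstar n v = 0 ∧
      (momentOstar n v)ᵀ * Smat n + Smat n * momentOstar n v = 0) ∧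
    -- (b) `(1/2) tr(ν(v,u) X) = Im((−Xv)* I_{n,n} u)`
    (∀ X : Matrix (Fin n ⊕ Fin n) (Fin n ⊕ Fin n) ℂ,
      Xᴴ * Inn n + Inn n * X = 0 → Xᵀ * Smat n + Smat n * X = 0 →
      ∀ v u : Fin n ⊕ Fin n → ℂ,
        (1 / 2 : ℂ) * Matrix.trace (momentOstarDeriv n v u * X)
          = ((dotProduct (star (-(X.mulVec v))) ((Inn n).mulVec u)).im : ℂ)) ∧
    -- (c) `O*(2n)`-equivariance
    (∀ g : Matrix (Fin n ⊕ Fin n) (Fin n ⊕ Fin n) ℂ,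
      gᴴ * Inn n * g = Inn n → gᵀ * Smat n * g = Smat n →
      ∀ v : Fin n ⊕ Fin n → ℂ,
        momentOstar n (g.mulVec v) = g * momentOstar n v * g⁻¹) :=
  moment_map_ostar_general n
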